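/- Let f = a₀x₀ + a₁x₁ + a₂x₂ + a₃x₀² + a₆x₁² + a₈x₂² + x₀x₁x₂ with a₃ = a₆ = a₈ = 0 and a₀a₁a₂ ≠ 0, i.e., f = a₀x₀ + a₁x₁ + a₂x₂ + x₀x₁x₂. Then the affine critical points of f are the solutions of x₁x₂ = -a₀, x₀x₂ = -a₁, x₀x₁ = -a₂, and there are exactly 2 critical points, each nondegenerate, so the total Milnor number μ = 2. -/

import Mathlib

/-!
From the critical equations, `x₀ ≠ 0`, `x₁ = -a₂/x₀`, `x₂ = -a₁/x₀` and `a₀x₀² = -a₁a₂`, so the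
critical points are the two points `±(s, -a₂/s, -a₁/s)` with `a₀s² = -a₁a₂`. At a critical point
the Hessian determinant is `2x₀x₁x₂`, whose square is `-4a₀a₁a₂ ≠ 0`.

Modulo the Jacobian ideal, `xᵢ ∂ᵢf = aᵢxᵢ + x₀x₁x₂` gives `aᵢxᵢ = a₀x₀` for every `i`, and
`a₀x₀² = -a₁a₂`; hence the Milnor algebra is spanned by `1, x₀`. Conversely every point of the
zero locus of an ideal is a character of the quotient algebra, and distinct characters are linearly
independent, so the two critical points force dimension at least `2`.
-/

open MvPolynomial

/-- `f = a₀x₀ + a₁x₁ + a₂x₂ + x₀x₁x₂`. -/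
noncomputable def ftri (a0 a1 a2 : ℂ) : MvPolynomial (Fin 3) ℂ :=
  C a0 * X 0 + C a1 * X 1 + C a2 * X 2 + X 0 * X 1 * X 2

theorem Algebra.span_eq_top_of_mul_mem_span {K A : Type*} [CommSemiring K] [CommSemiring A]
    [Algebra K A] {G T : Set A} (hG : Algebra.adjoin K G = ⊤) (h1 : 1 ∈ Submodule.span K T)
    (hmul : ∀ g ∈ G, ∀ t ∈ T, t * g ∈ Submodule.span K T) : Submodule.span K T = ⊤ := by
  have key : ∀ a ∈ Algebra.adjoin K G, ∀ s ∈ Submodule.span K T, s * a ∈ Submodule.span K T := by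
    intro a ha
    induction ha using Algebra.adjoin_induction with
    | mem g hg =>
      intro s hs
      induction hs using Submodule.span_induction with
      | mem t ht => exact hmul g hg t ht
      | zero => simp
      | add x y _ _ hx hy => rw [add_mul]; exact add_mem hx hy
      | smul c x _ hx => rw [smul_mul_assoc]; exact Submodule.smul_mem _ c hx
    | algebraMap r =>
      intro s hs
      rw [mul_comm, ← Algebra.smul_def]
      exact Submodule.smul_mem _ r hs
    | add x y _ _ hx hy => intro s hs; rw [mul_add]; exact add_mem (hx s hs) (hy s hs)
    | mul x y _ _ hx hy => intro s hs; rw [← mul_assoc]; exact hy _ (hx s hs)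
  refine Submodule.eq_top_iff'.mpr fun a => ?_
  simpa using key a (hG ▸ Algebra.mem_top) 1 h1

theorem Ideal.Quotient.adjoin_range_mkₐ_X {R σ : Type*} [CommRing R]
    (I : Ideal (MvPolynomial σ R)) :
    Algebra.adjoin R (Set.range fun i => Ideal.Quotient.mkₐ R I (X i)) = ⊤ := by
  rw [Set.range_comp' (Ideal.Quotient.mkₐ R I) X, Algebra.adjoin_image, adjoin_range_X,
    Algebra.map_top, AlgHom.range_eq_top]
  exact Ideal.Quotient.mkₐ_surjective R I

theorem setOf_mul_sq_eq_mul_sq {K : Type*} [Field K] {a : K} (ha : a ≠ 0) (s : K) :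
    {t | a * t ^ 2 = a * s ^ 2} = {s, -s} := by
  ext t
  simp [ha, sq_eq_sq_iff_eq_or_eq_neg]

namespace MvPolynomial

variable {σ K : Type*} [Field K]

theorem card_zeroLocus_le_finrank (I : Ideal (MvPolynomial σ K))
    [Module.Finite K (MvPolynomial σ K ⧸ I)] :
    Nat.card (zeroLocus K I) ≤ Module.finrank K (MvPolynomial σ K ⧸ I) := by
  let toAlgHom (x : zeroLocus K I) : MvPolynomial σ K ⧸ I →ₐ[K] K :=
    Ideal.Quotient.liftₐ I (aeval x.1) (mem_zeroLocus_iff.mp x.2)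
  have inj : Function.Injective toAlgHom := fun x y hxy => by
    ext i
    simpa [toAlgHom] using congr($hxy (Ideal.Quotient.mk I (X i)))
  exact (Nat.card_le_card_of_injective _ inj).trans (card_algHom_le_finrank K _ K)

noncomputable def jacobianIdeal {R : Type*} [CommSemiring R] (f : MvPolynomial σ R) :
    Ideal (MvPolynomial σ R) :=
  Ideal.span (Set.range fun i => pderiv i f)

theorem zeroLocus_jacobianIdeal (f : MvPolynomial σ K) :
    zeroLocus K (jacobianIdeal f) = {x | ∀ i, eval x (pderiv i f) = 0} := by
  simp [jacobianIdeal, zeroLocus_span]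

end MvPolynomial

section ftri

variable (a0 a1 a2 : ℂ)

theorem pderiv_ftri_zero : pderiv 0 (ftri a0 a1 a2) = C a0 + X 1 * X 2 := by
  simp [ftri, pderiv_X, mul_comm]

theorem pderiv_ftri_one : pderiv 1 (ftri a0 a1 a2) = C a1 + X 0 * X 2 := by
  simp [ftri, pderiv_X, mul_comm]

theorem pderiv_ftri_two : pderiv 2 (ftri a0 a1 a2) = C a2 + X 0 * X 1 := by
  simp [ftri, pderiv_X]

theorem X_mul_pderiv_ftri (i : Fin 3) :
    X i * pderiv i (ftri a0 a1 a2) = C (![a0, a1, a2] i) * X i + X 0 * X 1 * X 2 := by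
  fin_cases i <;>
    simp only [Fin.zero_eta, Fin.mk_one, Fin.reduceFinMk, Fin.isValue, Matrix.cons_val,
      pderiv_ftri_zero, pderiv_ftri_one, pderiv_ftri_two] <;>
    ring

theorem forall_eval_pderiv_ftri_eq_zero_iff (x : Fin 3 → ℂ) :
    (∀ i, eval x (pderiv i (ftri a0 a1 a2)) = 0) ↔
      x 1 * x 2 = -a0 ∧ x 0 * x 2 = -a1 ∧ x 0 * x 1 = -a2 := by
  simp [Fin.forall_fin_succ, pderiv_ftri_zero, pderiv_ftri_one, pderiv_ftri_two,
    eq_neg_iff_add_eq_zero, add_comm]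

theorem hessian_ftri (x : Fin 3 → ℂ) :
    Matrix.of (fun i j : Fin 3 => eval x (pderiv i (pderiv j (ftri a0 a1 a2)))) =
      !![0, x 2, x 1; x 2, 0, x 0; x 1, x 0, 0] := by
  ext i j
  fin_cases i <;> fin_cases j <;>
    simp [pderiv_ftri_zero, pderiv_ftri_one, pderiv_ftri_two, pderiv_X]

theorem det_hessian_ftri (x : Fin 3 → ℂ) :
    (Matrix.of fun i j : Fin 3 => eval x (pderiv i (pderiv j (ftri a0 a1 a2)))).det =
      2 * (x 0 * x 1 * x 2) := by
  rw [hessian_ftri]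
  simp only [Matrix.det_fin_three, Matrix.of_apply, Matrix.cons_val', Matrix.cons_val_zero,
    Matrix.cons_val_fin_one, Matrix.cons_val_one, Matrix.cons_val]
  ring

variable {a0 a1 a2}

theorem setOf_ftri_equations_eq_image (h1 : a1 ≠ 0) (h2 : a2 ≠ 0) :
    {x : Fin 3 → ℂ | x 1 * x 2 = -a0 ∧ x 0 * x 2 = -a1 ∧ x 0 * x 1 = -a2} =
      (fun t => ![t, -a2 / t, -a1 / t]) '' {t | a0 * t ^ 2 = -(a1 * a2)} := by
  ext x
  constructor
  · rintro ⟨e0, e1, e2⟩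
    have hx0 : x 0 ≠ 0 := by
      rintro hx
      rw [hx, zero_mul] at e1
      exact h1 (neg_eq_zero.mp e1.symm)
    refine ⟨x 0, show a0 * x 0 ^ 2 = _ by
      linear_combination x 0 ^ 2 * e0 - x 0 * x 2 * e2 + a2 * e1, ?_⟩
    ext i
    fin_cases i
    · rfl
    · show -a2 / x 0 = x 1
      field_simp
      linear_combination -e2
    · show -a1 / x 0 = x 2
      field_simp
      linear_combination -e1
  · rintro ⟨t, ht : a0 * t ^ 2 = -(a1 * a2), rfl⟩
    have ht0 : t ≠ 0 := by
      rintro rfl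
      exact mul_ne_zero h1 h2 (by linear_combination ht)
    show -a2 / t * (-a1 / t) = -a0 ∧ t * (-a1 / t) = -a1 ∧ t * (-a2 / t) = -a2
    refine ⟨?_, by field_simp, by field_simp⟩
    field_simp
    linear_combination ht

theorem setOf_critical_ftri_eq_pair (h0 : a0 ≠ 0) (h1 : a1 ≠ 0) (h2 : a2 ≠ 0) {s : ℂ}
    (hs : a0 * s ^ 2 = -(a1 * a2)) :
    {x | ∀ i, eval x (pderiv i (ftri a0 a1 a2)) = 0} =
      {![s, -a2 / s, -a1 / s], ![-s, -a2 / -s, -a1 / -s]} := by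
  rw [Set.ext (forall_eval_pderiv_ftri_eq_zero_iff a0 a1 a2), setOf_ftri_equations_eq_image h1 h2,
    ← hs, setOf_mul_sq_eq_mul_sq h0, Set.image_pair]

theorem det_hessian_ftri_ne_zero (h : a0 * a1 * a2 ≠ 0) {x : Fin 3 → ℂ}
    (hx : ∀ i, eval x (pderiv i (ftri a0 a1 a2)) = 0) :
    (Matrix.of fun i j : Fin 3 => eval x (pderiv i (pderiv j (ftri a0 a1 a2)))).det ≠ 0 := by
  obtain ⟨e0, e1, e2⟩ := (forall_eval_pderiv_ftri_eq_zero_iff a0 a1 a2 x).mp hx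
  have hsq : (x 0 * x 1 * x 2) ^ 2 = -(a0 * a1 * a2) := by
    linear_combination x 0 * x 2 * (x 1 * x 2) * e2 - a2 * (x 1 * x 2) * e1 + a1 * a2 * e0
  rw [det_hessian_ftri]
  exact mul_ne_zero two_ne_zero (ne_zero_pow two_ne_zero (hsq ▸ neg_ne_zero.mpr h))

end ftri

section milnorAlgebra

variable (a0 a1 a2 : ℂ)

local notation "π" => Ideal.Quotient.mkₐ ℂ (jacobianIdeal (ftri a0 a1 a2))

theorem mkₐ_pderiv_ftri (i : Fin 3) : π (pderiv i (ftri a0 a1 a2)) = 0 := by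
  rw [Ideal.Quotient.mkₐ_eq_mk, Ideal.Quotient.eq_zero_iff_mem]
  exact Ideal.subset_span ⟨i, rfl⟩

theorem smul_mkₐ_X_ftri (i : Fin 3) :
    ![a0, a1, a2] i • π (X i) = -π (X 0 * X 1 * X 2) := by
  have h := congr(π $(X_mul_pderiv_ftri a0 a1 a2 i))
  rw [map_mul, mkₐ_pderiv_ftri, mul_zero, map_add, C_mul', map_smul] at h
  exact eq_neg_of_add_eq_zero_left h.symm

theorem smul_mkₐ_X_zero_mul_self :
    a0 • (π (X 0) * π (X 0)) = -(a1 * a2) • 1 := by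
  have h := mkₐ_pderiv_ftri a0 a1 a2 2
  rw [pderiv_ftri_two, map_add, map_mul, ← algebraMap_eq, AlgHom.commutes,
    Algebra.algebraMap_eq_smul_one] at h
  calc a0 • (π (X 0) * π (X 0)) = π (X 0) * (![a0, a1, a2] 0 • π (X 0)) := (mul_smul_comm ..).symm
    _ = π (X 0) * (![a0, a1, a2] 1 • π (X 1)) := by rw [smul_mkₐ_X_ftri, smul_mkₐ_X_ftri]
    _ = a1 • (π (X 0) * π (X 1)) := mul_smul_comm ..
    _ = -(a1 * a2) • 1 := by rw [eq_neg_of_add_eq_zero_right h, smul_neg, smul_smul, neg_smul]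

variable {a0 a1 a2}

theorem span_one_mkₐ_X_zero_eq_top (h0 : a0 ≠ 0) (h1 : a1 ≠ 0) (h2 : a2 ≠ 0) :
    Submodule.span ℂ {1, π (X 0)} = ⊤ := by
  have ha : ∀ i, ![a0, a1, a2] i ≠ 0 := by
    intro i
    fin_cases i <;> assumption
  refine Algebra.span_eq_top_of_mul_mem_span (Ideal.Quotient.adjoin_range_mkₐ_X _)
    (Submodule.subset_span (Set.mem_insert _ _)) ?_
  rintro _ ⟨i, rfl⟩ t (rfl | rfl) <;> dsimp only
  · rw [← Submodule.smul_mem_iff _ (ha i), one_mul, smul_mkₐ_X_ftri, ← smul_mkₐ_X_ftri _ _ _ 0]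
    exact Submodule.smul_mem _ _ (Submodule.subset_span (Set.mem_insert_of_mem _ rfl))
  · rw [← Submodule.smul_mem_iff _ (ha i), ← mul_smul_comm, smul_mkₐ_X_ftri,
      ← smul_mkₐ_X_ftri _ _ _ 0, mul_smul_comm, Matrix.cons_val_zero, smul_mkₐ_X_zero_mul_self]
    exact Submodule.smul_mem _ _ (Submodule.subset_span (Set.mem_insert _ _))

theorem finite_quotient_jacobianIdeal_ftri (h0 : a0 ≠ 0) (h1 : a1 ≠ 0) (h2 : a2 ≠ 0) :
    Module.Finite ℂ (MvPolynomial (Fin 3) ℂ ⧸ jacobianIdeal (ftri a0 a1 a2)) :=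
  ⟨span_one_mkₐ_X_zero_eq_top h0 h1 h2 ▸ Submodule.fg_span (Set.toFinite _)⟩

theorem finrank_quotient_jacobianIdeal_ftri_le_two (h0 : a0 ≠ 0) (h1 : a1 ≠ 0) (h2 : a2 ≠ 0) :
    Module.finrank ℂ (MvPolynomial (Fin 3) ℂ ⧸ jacobianIdeal (ftri a0 a1 a2)) ≤ 2 := by
  refine finrank_le_of_span_eq_top (v := ![1, π (X 0)]) ?_
  rw [Matrix.range_cons, Matrix.range_cons, Matrix.range_empty, Set.union_empty,
    Set.singleton_union]
  exact span_one_mkₐ_X_zero_eq_top h0 h1 h2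

end milnorAlgebra

/-- For `f = a₀x₀ + a₁x₁ + a₂x₂ + x₀x₁x₂` with `a₀a₁a₂ ≠ 0`: the critical points
are exactly the solutions of `x₁x₂ = -a₀`, `x₀x₂ = -a₁`, `x₀x₁ = -a₂`; there are
exactly two of them, each nondegenerate (nonzero Hessian determinant), and the
total Milnor number `μ = dim ℂ[x₀,x₁,x₂]/Jf` equals `2`. -/
theorem triangle_two_nondegenerate_critical_points (a0 a1 a2 : ℂ)
    (h : a0 * a1 * a2 ≠ 0) :
    (∀ p : Fin 3 → ℂ,
      (∀ i : Fin 3, eval p (pderiv i (ftri a0 a1 a2)) = 0) ↔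
        (p 1 * p 2 = -a0 ∧ p 0 * p 2 = -a1 ∧ p 0 * p 1 = -a2)) ∧
    (∃ p q : Fin 3 → ℂ, p ≠ q ∧
      {x : Fin 3 → ℂ | ∀ i : Fin 3, eval x (pderiv i (ftri a0 a1 a2)) = 0} = {p, q}) ∧
    (∀ p : Fin 3 → ℂ, (∀ i : Fin 3, eval p (pderiv i (ftri a0 a1 a2)) = 0) →
      (Matrix.of fun i j : Fin 3 =>
        eval p (pderiv i (pderiv j (ftri a0 a1 a2)))).det ≠ 0) ∧
    Module.finrank ℂ
      (MvPolynomial (Fin 3) ℂ ⧸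
        Ideal.span (Set.range fun i : Fin 3 => pderiv i (ftri a0 a1 a2))) = 2 := by
  obtain ⟨⟨h0, h1⟩, h2⟩ : (a0 ≠ 0 ∧ a1 ≠ 0) ∧ a2 ≠ 0 := by simpa only [mul_ne_zero_iff] using h
  obtain ⟨s, hs⟩ : ∃ s : ℂ, a0 * s ^ 2 = -(a1 * a2) := by
    obtain ⟨s, hs⟩ := IsAlgClosed.exists_pow_nat_eq (-(a1 * a2) / a0) two_pos
    exact ⟨s, by rw [hs]; field_simp⟩
  have hs0 : s ≠ 0 := by
    rintro rfl
    exact mul_ne_zero h1 h2 (by linear_combination hs)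
  have hcrit := setOf_critical_ftri_eq_pair h0 h1 h2 hs
  have hne : ![s, -a2 / s, -a1 / s] ≠ ![-s, -a2 / -s, -a1 / -s] :=
    fun e => hs0 (self_eq_neg.mp congr($e 0))
  have := finite_quotient_jacobianIdeal_ftri h0 h1 h2
  refine ⟨forall_eval_pderiv_ftri_eq_zero_iff a0 a1 a2, ⟨_, _, hne, hcrit⟩,
    fun x hx => det_hessian_ftri_ne_zero h hx,
    (finrank_quotient_jacobianIdeal_ftri_le_two h0 h1 h2).antisymm ?_⟩
  calc 2 = Nat.card (zeroLocus ℂ (jacobianIdeal (ftri a0 a1 a2))) := by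
        rw [zeroLocus_jacobianIdeal, hcrit, Nat.card_coe_set_eq, Set.ncard_pair hne]
    _ ≤ _ := card_zeroLocus_le_finrank _
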